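/- arXiv:2509.02529 — 6 statements merged into one kernel-verified Lean document; each statement's English description precedes it below -/
import Mathlib

section
/- Let ρ : Matrix (Fin m) (Fin m) ℂ → Matrix (Fin d) (Fin d) ℂ be a ℂ-linear map satisfying ρ(X * Y) = ρ(X) * ρ(Y) for all X, Y. Then for all ℂ-linear maps Φ, Ψ : Matrix (Fin m) (Fin m) ℂ → Matrix (Fin n) (Fin n) ℂ, the Fourier transform of the convolution is the product of the Fourier transforms: ∑_{i,j} ρ(e_{ij}) ⊗ₖ (Φ * Ψ)(e_{ij}) = (∑_{i,j} ρ(e_{ij}) ⊗ₖ Φ(e_{ij})) * (∑_{i,j} ρ(e_{ij}) ⊗ₖ Ψ(e_{ij})). -/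
/-!
Expanding the product of the two Fourier transforms gives the terms
`ρ(e_{ij}) ρ(e_{kl}) ⊗ₖ Φ(e_{ij}) Ψ(e_{kl})`. Since `ρ` is multiplicative and
`e_{ij} e_{kl} = δ_{jk} e_{il}`, only the terms with `j = k` survive, and they regroup into
`ρ(e_{il}) ⊗ₖ ∑ j, Φ(e_{ij}) Ψ(e_{jl}) = ρ(e_{il}) ⊗ₖ (Φ * Ψ)(e_{il})`.
-/

open scoped Kronecker

namespace Stmt4

/-- The convolution of two linear maps `Φ Ψ`: the unique ℂ-linear map with
`(Φ * Ψ)(e_{ij}) = ∑ k, Φ(e_{ik}) * Ψ(e_{kj})`. -/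
noncomputable def conv {m n : ℕ}
    (Φ Ψ : Matrix (Fin m) (Fin m) ℂ →ₗ[ℂ] Matrix (Fin n) (Fin n) ℂ) :
    Matrix (Fin m) (Fin m) ℂ →ₗ[ℂ] Matrix (Fin n) (Fin n) ℂ :=
  (Matrix.stdBasis ℂ (Fin m) (Fin m)).constr ℂ fun p =>
    ∑ k : Fin m, Φ (Matrix.single p.1 k 1) * Ψ (Matrix.single k p.2 1)

lemma conv_single {m n : ℕ}
    (Φ Ψ : Matrix (Fin m) (Fin m) ℂ →ₗ[ℂ] Matrix (Fin n) (Fin n) ℂ) (i j : Fin m) :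
    conv Φ Ψ (Matrix.single i j 1) =
      ∑ k : Fin m, Φ (Matrix.single i k 1) * Ψ (Matrix.single k j 1) := by
  rw [← Matrix.stdBasis_eq_single]
  exact (Matrix.stdBasis ℂ (Fin m) (Fin m)).constr_basis ℂ _ (i, j)

open Matrix

lemma kronecker_finset_sum {R ι α β γ δ : Type*} [CommSemiring R] (A : Matrix α β R)
    (s : Finset ι) (f : ι → Matrix γ δ R) : A ⊗ₖ (∑ x ∈ s, f x) = ∑ x ∈ s, A ⊗ₖ f x :=
  map_sum (kroneckerBilinear (R := R) A) f s

section Fourier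

variable {R ι κ ν : Type*} [CommSemiring R] [Fintype ι] [DecidableEq ι] [Fintype κ] [Fintype ν]

noncomputable def fourier (ρ : Matrix ι ι R →ₗ[R] Matrix κ κ R)
    (Φ : Matrix ι ι R →ₗ[R] Matrix ν ν R) : Matrix (κ × ν) (κ × ν) R :=
  ∑ i, ∑ j, ρ (single i j 1) ⊗ₖ Φ (single i j 1)

lemma map_single_kronecker_mul_map_single_kronecker {ρ : Matrix ι ι R →ₗ[R] Matrix κ κ R}
    (hρ : ∀ X Y, ρ (X * Y) = ρ X * ρ Y) (i j k l : ι) (A B : Matrix ν ν R) :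
    ρ (single i j 1) ⊗ₖ A * ρ (single k l 1) ⊗ₖ B =
      if j = k then ρ (single i l 1) ⊗ₖ (A * B) else 0 := by
  rw [← mul_kronecker_mul, ← hρ]
  split_ifs with hjk
  · rw [hjk, single_mul_single_same, one_mul]
  · rw [single_mul_single_of_ne (h := hjk), map_zero, zero_kronecker]

lemma fourier_mul_fourier {ρ : Matrix ι ι R →ₗ[R] Matrix κ κ R}
    (hρ : ∀ X Y, ρ (X * Y) = ρ X * ρ Y) (Φ Ψ : Matrix ι ι R →ₗ[R] Matrix ν ν R) :
    fourier ρ Φ * fourier ρ Ψ =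
      ∑ i, ∑ l, ρ (single i l 1) ⊗ₖ ∑ j, Φ (single i j 1) * Ψ (single j l 1) :=
  calc fourier ρ Φ * fourier ρ Ψ
      = ∑ i, ∑ j, ∑ k, ∑ l,
          ρ (single i j 1) ⊗ₖ Φ (single i j 1) * ρ (single k l 1) ⊗ₖ Ψ (single k l 1) := by
        simp only [fourier, Finset.sum_mul]
        simp only [Finset.mul_sum]
    _ = ∑ i, ∑ j, ∑ l, ρ (single i l 1) ⊗ₖ (Φ (single i j 1) * Ψ (single j l 1)) := by
        simp only [map_single_kronecker_mul_map_single_kronecker hρ, Finset.sum_ite_irrel,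
          Finset.sum_const_zero, Finset.sum_ite_eq, Finset.mem_univ, ↓reduceIte]
    _ = _ := by
        simp only [kronecker_finset_sum]
        exact Finset.sum_congr rfl fun i _ => Finset.sum_comm

end Fourier

theorem fourier_conv_eq_mul_fourier {m n d : ℕ}
    (ρ : Matrix (Fin m) (Fin m) ℂ →ₗ[ℂ] Matrix (Fin d) (Fin d) ℂ)
    (hρ : ∀ X Y : Matrix (Fin m) (Fin m) ℂ, ρ (X * Y) = ρ X * ρ Y)
    (Φ Ψ : Matrix (Fin m) (Fin m) ℂ →ₗ[ℂ] Matrix (Fin n) (Fin n) ℂ) :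
    (∑ i : Fin m, ∑ j : Fin m,
        ρ (Matrix.single i j 1) ⊗ₖ conv Φ Ψ (Matrix.single i j 1)) =
      (∑ i : Fin m, ∑ j : Fin m,
          ρ (Matrix.single i j 1) ⊗ₖ Φ (Matrix.single i j 1)) *
        (∑ i : Fin m, ∑ j : Fin m,
          ρ (Matrix.single i j 1) ⊗ₖ Ψ (Matrix.single i j 1)) := by
  change _ = fourier ρ Φ * fourier ρ Ψ
  simp only [fourier_mul_fourier hρ, conv_single]

end Stmt4
end

section
/- Let G be a finite group and (ρ_i)_{i ∈ I} a complete family of unitary matrix representations ρ_i : G → Matrix (Fin (d i)) (Fin (d i)) ℂ. Then for every function Φ : G → Matrix (Fin n) (Fin n) ℂ and every g ∈ G, the Fourier inversion formula holds: Φ(g) = (1 / |G|) • ∑_{i ∈ I} (d i : ℂ) • tr₁[(ρ_i(g⁻¹) ⊗ₖ 1) * Φ̂(ρ_i)]. -/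
/-!
Right multiplication by `g` permutes the basis `G` of `ℂ[G]` without fixed points unless `g = 1`,
so its trace is `|G| δ_{g,1}`. Transporting it along the isomorphism
`ℂ[G] ≃ Π i, Matrix (Fin (d i)) (Fin (d i)) ℂ` given by completeness, where right multiplication
by `(M_i)_i` has trace `∑ i, d i * tr M_i`, yields `∑ i, d i * tr (ρ_i g) = |G| δ_{g,1}`.
Since `tr₁ ((ρ_i(g⁻¹) ⊗ₖ 1) * Φ̂(ρ_i)) = ∑ h, tr (ρ_i(g⁻¹ h)) • Φ h`, summing over `i` with
weights `d i` isolates `|G| • Φ g`.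
-/

open scoped Kronecker Matrix

namespace LinearMap

variable {R : Type*} [CommRing R]

theorem trace_piMap {ι : Type*} [Fintype ι] {M : ι → Type*}
    [∀ i, AddCommGroup (M i)] [∀ i, Module R (M i)] [∀ i, Module.Free R (M i)]
    [∀ i, Module.Finite R (M i)] (f : ∀ i, M i →ₗ[R] M i) :
    trace R (∀ i, M i) (piMap f) = ∑ i, trace R (M i) (f i) := by
  classical
  let b i := Module.Free.chooseBasis R (M i)
  rw [trace_eq_matrix_trace R (Pi.basis b), Matrix.trace, ← Finset.univ_sigma_univ,
    Finset.sum_sigma]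
  refine Finset.sum_congr rfl fun i _ => ?_
  rw [trace_eq_matrix_trace R (b i), Matrix.trace]
  refine Finset.sum_congr rfl fun a _ => ?_
  simp [toMatrix_apply, Pi.basis_repr, Pi.basis_apply]

theorem trace_vecMulLinear {n : Type*} [Fintype n] (M : Matrix n n R) :
    trace R (n → R) M.vecMulLinear = M.trace := by
  classical
  rw [← Matrix.mulVecLin_transpose, ← Matrix.toLin'_apply', Matrix.trace_toLin'_eq,
    Matrix.trace_transpose]

theorem trace_mulRight_matrix {n : Type*} [Fintype n] (M : Matrix n n R) :
    trace R (Matrix n n R) (mulRight R M) = Fintype.card n * M.trace := by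
  have h : mulRight R M =
      (Matrix.ofLinearEquiv R).conj (piMap fun _ : n => M.vecMulLinear) := by
    ext X i j
    simp [LinearEquiv.conj_apply, Matrix.mul_apply, Matrix.vecMul, dotProduct]
  rw [h, trace_conj', trace_piMap]
  simp [trace_vecMulLinear]

theorem trace_mulRight_pi {ι : Type*} [Fintype ι] {A : ι → Type*}
    [∀ i, Ring (A i)] [∀ i, Algebra R (A i)] [∀ i, Module.Free R (A i)]
    [∀ i, Module.Finite R (A i)] (a : ∀ i, A i) :
    trace R (∀ i, A i) (mulRight R a) = ∑ i, trace R (A i) (mulRight R (a i)) := by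
  rw [← trace_piMap]
  rfl

theorem trace_mulRight_algEquiv {A B : Type*} [Ring A] [Ring B] [Algebra R A] [Algebra R B]
    (e : A ≃ₐ[R] B) (a : A) :
    trace R B (mulRight R (e a)) = trace R A (mulRight R a) := by
  rw [← trace_conj' (mulRight R a) e.toLinearEquiv]
  congr 1
  ext x
  simp [LinearEquiv.conj_apply]

end LinearMap

namespace MonoidAlgebra

variable {R G : Type*} [CommRing R] [Group G] [Fintype G]

open scoped Classical in
theorem trace_mulRight_of (k : G) :
    LinearMap.trace R (MonoidAlgebra R G) (LinearMap.mulRight R (of R G k))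
      = if k = 1 then (Fintype.card G : R) else 0 := by
  rw [LinearMap.trace_eq_matrix_trace R (MonoidAlgebra.basis G R), Matrix.trace]
  have hdiag (j : G) :
      LinearMap.toMatrix (basis G R) (basis G R) (LinearMap.mulRight R (of R G k)) j j =
        if k = 1 then 1 else 0 := by
    simp [LinearMap.toMatrix_apply, single_mul_single, basis, Finsupp.single_apply]
  simp_rw [Matrix.diag_apply, hdiag]
  simp

open scoped Classical in
theorem sum_card_mul_trace_algEquiv_of {ι : Type*} [Fintype ι] {n : ι → Type*}
    [∀ i, Fintype (n i)] [∀ i, DecidableEq (n i)]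
    (e : MonoidAlgebra R G ≃ₐ[R] ∀ i, Matrix (n i) (n i) R) (k : G) :
    ∑ i, (Fintype.card (n i) : R) * (e (of R G k) i).trace =
      if k = 1 then (Fintype.card G : R) else 0 := by
  rw [← trace_mulRight_of, ← LinearMap.trace_mulRight_algEquiv e, LinearMap.trace_mulRight_pi]
  simp_rw [LinearMap.trace_mulRight_matrix]

end MonoidAlgebra

namespace Stmt5

/-- Partial trace over the first tensor factor:
`(tr₁ M)(a,b) = ∑ x, M ((x,a),(x,b))`. -/
noncomputable def ptrace {d n : ℕ} (M : Matrix (Fin d × Fin n) (Fin d × Fin n) ℂ) :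
    Matrix (Fin n) (Fin n) ℂ :=
  Matrix.of fun a b => ∑ x : Fin d, M (x, a) (x, b)

/-- The Fourier transform `Φ̂(ρ) = ∑ g, ρ g ⊗ₖ Φ g`. -/
noncomputable def fourier {G : Type*} [Fintype G] {d n : ℕ}
    (ρ : G → Matrix (Fin d) (Fin d) ℂ) (Φ : G → Matrix (Fin n) (Fin n) ℂ) :
    Matrix (Fin d × Fin n) (Fin d × Fin n) ℂ :=
  ∑ g : G, ρ g ⊗ₖ Φ g

theorem ptrace_sum {ι : Type*} (s : Finset ι) {d n : ℕ}
    (M : ι → Matrix (Fin d × Fin n) (Fin d × Fin n) ℂ) :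
    ptrace (∑ i ∈ s, M i) = ∑ i ∈ s, ptrace (M i) := by
  ext a b
  simp only [ptrace, Matrix.of_apply, Matrix.sum_apply]
  exact Finset.sum_comm

theorem ptrace_kronecker {d n : ℕ} (A : Matrix (Fin d) (Fin d) ℂ) (B : Matrix (Fin n) (Fin n) ℂ) :
    ptrace (A ⊗ₖ B) = A.trace • B := by
  ext a b
  simp [ptrace, Matrix.trace, Finset.sum_mul]

theorem ptrace_kronecker_one_mul_fourier {G : Type*} [Fintype G] {d n : ℕ}
    (A : Matrix (Fin d) (Fin d) ℂ) (ρ : G → Matrix (Fin d) (Fin d) ℂ)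
    (Φ : G → Matrix (Fin n) (Fin n) ℂ) :
    ptrace ((A ⊗ₖ (1 : Matrix (Fin n) (Fin n) ℂ)) * fourier ρ Φ) =
      ∑ h, (A * ρ h).trace • Φ h := by
  simp_rw [fourier, Finset.mul_sum, ← Matrix.mul_kronecker_mul, Matrix.one_mul, ptrace_sum,
    ptrace_kronecker]

theorem fourier_inversion_general
    {G : Type*} [Group G] [Fintype G] {I : Type*} [Fintype I]
    (d : I → ℕ) (ρ : ∀ i, G → Matrix (Fin (d i)) (Fin (d i)) ℂ)
    (hmul : ∀ i (g h : G), ρ i (g * h) = ρ i g * ρ i h)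
    (hone : ∀ i, ρ i 1 = 1)
    (hcomplete : Function.Bijective
      ((MonoidAlgebra.lift ℂ (∀ i, Matrix (Fin (d i)) (Fin (d i)) ℂ) G)
        { toFun := fun g i => ρ i g
          map_one' := funext fun i => hone i
          map_mul' := fun g h => funext fun i => hmul i g h }))
    {n : ℕ} (Φ : G → Matrix (Fin n) (Fin n) ℂ) (g : G) :
    Φ g = (1 / (Fintype.card G : ℂ)) •
      ∑ i : I, (d i : ℂ) •
        ptrace ((ρ i g⁻¹ ⊗ₖ (1 : Matrix (Fin n) (Fin n) ℂ)) * fourier (ρ i) Φ) := by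
  classical
  let e := AlgEquiv.ofBijective _ hcomplete
  have horth (k : G) :
      ∑ i, (d i : ℂ) * (ρ i k).trace = if k = 1 then (Fintype.card G : ℂ) else 0 := by
    simpa [e] using MonoidAlgebra.sum_card_mul_trace_algEquiv_of e k
  have hcard : (Fintype.card G : ℂ) ≠ 0 := Nat.cast_ne_zero.mpr Fintype.card_ne_zero
  calc Φ g = (1 / (Fintype.card G : ℂ)) •
        ∑ h, (∑ i, (d i : ℂ) * (ρ i (g⁻¹ * h)).trace) • Φ h := by
        simp_rw [horth, inv_mul_eq_one, ite_smul, zero_smul, Finset.sum_ite_eq, Finset.mem_univ,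
          if_true, smul_smul, one_div, inv_mul_cancel₀ hcard, one_smul]
    _ = _ := by
        congr 1
        simp_rw [ptrace_kronecker_one_mul_fourier, ← hmul, Finset.smul_sum, smul_smul,
          Finset.sum_smul]
        exact Finset.sum_comm

theorem fourier_inversion
    {G : Type*} [Group G] [Fintype G] {I : Type*} [Fintype I]
    (d : I → ℕ) (ρ : ∀ i, G → Matrix (Fin (d i)) (Fin (d i)) ℂ)
    (hmul : ∀ i (g h : G), ρ i (g * h) = ρ i g * ρ i h)
    (hone : ∀ i, ρ i 1 = 1)
    (hstar : ∀ i (g : G), (ρ i g)ᴴ = ρ i g⁻¹)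
    (hcomplete : Function.Bijective
      ((MonoidAlgebra.lift ℂ (∀ i, Matrix (Fin (d i)) (Fin (d i)) ℂ) G)
        { toFun := fun g i => ρ i g
          map_one' := funext fun i => hone i
          map_mul' := fun g h => funext fun i => hmul i g h }))
    {n : ℕ} (Φ : G → Matrix (Fin n) (Fin n) ℂ) (g : G) :
    Φ g = (1 / (Fintype.card G : ℂ)) •
      ∑ i : I, (d i : ℂ) •
        ptrace ((ρ i g⁻¹ ⊗ₖ (1 : Matrix (Fin n) (Fin n) ℂ)) * fourier (ρ i) Φ) :=
  fourier_inversion_general d ρ hmul hone hcomplete Φ g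

end Stmt5
end

section
/- Let G be a finite group and (ρ_i)_{i ∈ I} a complete family of unitary matrix representations ρ_i : G → Matrix (Fin (d i)) (Fin (d i)) ℂ. Then for all functions Φ, Ψ : G → Matrix (Fin n) (Fin n) ℂ, the Plancherel formula holds: ∑_{g ∈ G} Φ(g⁻¹) * Ψ(g) = (1 / |G|) • ∑_{i ∈ I} (d i : ℂ) • tr₁[Φ̂(ρ_i) * Ψ̂(ρ_i)]. -/
/-!
Left multiplication by `a` on `ℂ[G]` and left multiplication by its image on `∏ᵢ Mat_{dᵢ}(ℂ)`
are conjugate under the isomorphism given by completeness, so they have the same trace. On `ℂ[G]`,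
left multiplication by `g` permutes the basis `G` without fixed points unless `g = 1`, so its trace
is `|G| δ_{g,1}`; on `∏ᵢ Mat_{dᵢ}(ℂ)`, left multiplication by `x` has trace `∑ᵢ dᵢ tr xᵢ`. Hence
`∑ᵢ dᵢ tr ρᵢ(g) = |G| δ_{g,1}`. Expanding the Fourier transforms,
`tr₁[Φ̂(ρ) Ψ̂(ρ)] = ∑_{g,h} tr ρ(gh) Φ(g) Ψ(h)`, and summing over `i` with weights `dᵢ` keeps only
the terms with `gh = 1`.
-/

open scoped Kronecker Matrix

namespace Stmt7

/-- Partial trace over the first tensor factor: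
`(tr₁ M)(a,b) = ∑ x, M ((x,a),(x,b))`. -/
noncomputable def ptrace {d n : ℕ} (M : Matrix (Fin d × Fin n) (Fin d × Fin n) ℂ) :
    Matrix (Fin n) (Fin n) ℂ :=
  Matrix.of fun a b => ∑ x : Fin d, M (x, a) (x, b)

/-- The Fourier transform `Φ̂(ρ) = ∑ g, ρ g ⊗ₖ Φ g`. -/
noncomputable def fourier {G : Type*} [Fintype G] {d n : ℕ}
    (ρ : G → Matrix (Fin d) (Fin d) ℂ) (Φ : G → Matrix (Fin n) (Fin n) ℂ) :
    Matrix (Fin d × Fin n) (Fin d × Fin n) ℂ :=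
  ∑ g : G, ρ g ⊗ₖ Φ g

end Stmt7

theorem Matrix.stdBasis_repr_apply {R m n : Type*} [Semiring R] [Fintype m] [Fintype n]
    (M : Matrix m n R) (i : m) (j : n) :
    (Matrix.stdBasis R m n).repr M (i, j) = M i j := by
  simp [Matrix.stdBasis, Module.Basis.map_repr, Pi.basis_repr]

section TraceMulLeft

variable {R : Type*} [CommRing R]

theorem trace_mulLeft_pi_matrix {ι : Type*} [Fintype ι] {m : ι → Type*}
    [∀ i, Fintype (m i)] (x : ∀ i, Matrix (m i) (m i) R) :
    LinearMap.trace R _ (LinearMap.mulLeft R x) =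
      ∑ i, (Fintype.card (m i) : R) * (x i).trace := by
  classical
  let b := Pi.basis fun i => Matrix.stdBasis R (m i) (m i)
  have hdiag : ∀ i a c, b.repr (x * b ⟨i, (a, c)⟩) ⟨i, (a, c)⟩ = x i a a := by
    intro i a c
    simp [b, Matrix.stdBasis_eq_single, ← Pi.single_mul_right, Matrix.stdBasis_repr_apply]
  rw [LinearMap.trace_eq_matrix_trace R b, Matrix.trace, ← Finset.univ_sigma_univ,
    Finset.sum_sigma]
  simp only [Matrix.diag_apply, LinearMap.toMatrix_apply, LinearMap.mulLeft_apply,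
    Fintype.sum_prod_type, hdiag]
  simp [Matrix.trace, Finset.mul_sum]

theorem trace_mulLeft_of {G : Type*} [RightCancelMonoid G] [Fintype G] [DecidableEq G] (k : G) :
    LinearMap.trace R (MonoidAlgebra R G) (LinearMap.mulLeft R (MonoidAlgebra.of R G k)) =
      if k = 1 then (Fintype.card G : R) else 0 := by
  rw [LinearMap.trace_eq_matrix_trace R (MonoidAlgebra.basis G R), Matrix.trace]
  simp only [Matrix.diag_apply, LinearMap.toMatrix_apply, LinearMap.mulLeft_apply]
  simp [MonoidAlgebra.basis, MonoidAlgebra.single_mul_single, Finsupp.single_apply]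

theorem trace_mulLeft_algEquiv {A B : Type*} [Ring A] [Ring B] [Algebra R A] [Algebra R B]
    (e : A ≃ₐ[R] B) (a : A) :
    LinearMap.trace R B (LinearMap.mulLeft R (e a)) =
      LinearMap.trace R A (LinearMap.mulLeft R a) := by
  have hconj : LinearMap.mulLeft R (e a) = e.toLinearEquiv.conj (LinearMap.mulLeft R a) := by
    ext y
    simp [LinearEquiv.conj_apply]
  rw [hconj, LinearMap.trace_conj']

theorem sum_card_mul_trace_eq_of_bijective_lift {G : Type*} [RightCancelMonoid G] [Fintype G]
    [DecidableEq G] {ι : Type*} [Fintype ι] {m : ι → Type*} [∀ i, Fintype (m i)]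
    [∀ i, DecidableEq (m i)] (χ : G →* ∀ i, Matrix (m i) (m i) R)
    (hχ : Function.Bijective (MonoidAlgebra.lift R (∀ i, Matrix (m i) (m i) R) G χ)) (k : G) :
    ∑ i, (Fintype.card (m i) : R) * (χ k i).trace = if k = 1 then (Fintype.card G : R) else 0 := by
  rw [← trace_mulLeft_pi_matrix, ← trace_mulLeft_of k,
    ← trace_mulLeft_algEquiv (AlgEquiv.ofBijective _ hχ)]
  simp

end TraceMulLeft

theorem sum_sum_ite_mul_eq_one {G M : Type*} [Group G] [Fintype G] [DecidableEq G]
    [AddCommMonoid M] (f : G → G → M) :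
    ∑ g, ∑ h, (if g * h = 1 then f g h else 0) = ∑ h, f h⁻¹ h := by
  rw [Finset.sum_comm]
  simp [mul_eq_one_iff_eq_inv]

namespace Stmt7

theorem ptrace_sum {d n : ℕ} {α : Type*} (s : Finset α)
    (f : α → Matrix (Fin d × Fin n) (Fin d × Fin n) ℂ) :
    ptrace (∑ x ∈ s, f x) = ∑ x ∈ s, ptrace (f x) := by
  ext a b
  simp only [ptrace, Matrix.of_apply, Matrix.sum_apply]
  rw [Finset.sum_comm]

theorem ptrace_kronecker {d n : ℕ} (A : Matrix (Fin d) (Fin d) ℂ) (B : Matrix (Fin n) (Fin n) ℂ) :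
    ptrace (A ⊗ₖ B) = A.trace • B := by
  ext a b
  simp [ptrace, Matrix.trace, Finset.sum_mul]

theorem ptrace_fourier_mul_fourier {G : Type*} [Mul G] [Fintype G] {d n : ℕ}
    (ρ : G → Matrix (Fin d) (Fin d) ℂ) (hρ : ∀ g h, ρ (g * h) = ρ g * ρ h)
    (Φ Ψ : G → Matrix (Fin n) (Fin n) ℂ) :
    ptrace (fourier ρ Φ * fourier ρ Ψ) = ∑ g, ∑ h, (ρ (g * h)).trace • (Φ g * Ψ h) := by
  simp only [fourier, Finset.sum_mul_sum, ← Matrix.mul_kronecker_mul, ← hρ, ptrace_sum,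
    ptrace_kronecker]

theorem plancherel_general
    {G : Type*} [Group G] [Fintype G] {I : Type*} [Fintype I]
    (d : I → ℕ) (ρ : ∀ i, G → Matrix (Fin (d i)) (Fin (d i)) ℂ)
    (hmul : ∀ i (g h : G), ρ i (g * h) = ρ i g * ρ i h)
    (hone : ∀ i, ρ i 1 = 1)
    (hcomplete : Function.Bijective
      ((MonoidAlgebra.lift ℂ (∀ i, Matrix (Fin (d i)) (Fin (d i)) ℂ) G)
        { toFun := fun g i => ρ i g
          map_one' := funext fun i => hone i
          map_mul' := fun g h => funext fun i => hmul i g h }))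
    {n : ℕ} (Φ Ψ : G → Matrix (Fin n) (Fin n) ℂ) :
    ∑ g : G, Φ g⁻¹ * Ψ g = (1 / (Fintype.card G : ℂ)) •
      ∑ i : I, (d i : ℂ) • ptrace (fourier (ρ i) Φ * fourier (ρ i) Ψ) := by
  classical
  have hcard : (Fintype.card G : ℂ) ≠ 0 := Nat.cast_ne_zero.mpr Fintype.card_ne_zero
  have hχ := sum_card_mul_trace_eq_of_bijective_lift _ hcomplete
  simp only [Fintype.card_fin, MonoidHom.coe_mk, OneHom.coe_mk] at hχ
  calc ∑ g : G, Φ g⁻¹ * Ψ g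
      = (1 / (Fintype.card G : ℂ)) • ∑ g, ∑ h,
          (if g * h = 1 then (Fintype.card G : ℂ) • (Φ g * Ψ h) else 0) := by
        rw [sum_sum_ite_mul_eq_one, ← Finset.smul_sum, smul_smul, one_div,
          inv_mul_cancel₀ hcard, one_smul]
    _ = (1 / (Fintype.card G : ℂ)) • ∑ g, ∑ h,
          (∑ i, (d i : ℂ) * (ρ i (g * h)).trace) • (Φ g * Ψ h) := by
        simp only [hχ, ite_smul, zero_smul]
    _ = _ := by
        congr 1
        simp only [ptrace_fourier_mul_fourier _ (hmul _), Finset.smul_sum, smul_smul,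
          Finset.sum_smul]
        exact (Finset.sum_congr rfl fun _ _ => Finset.sum_comm).trans Finset.sum_comm

theorem plancherel
    {G : Type*} [Group G] [Fintype G] {I : Type*} [Fintype I]
    (d : I → ℕ) (ρ : ∀ i, G → Matrix (Fin (d i)) (Fin (d i)) ℂ)
    (hmul : ∀ i (g h : G), ρ i (g * h) = ρ i g * ρ i h)
    (hone : ∀ i, ρ i 1 = 1)
    (hstar : ∀ i (g : G), (ρ i g)ᴴ = ρ i g⁻¹)
    (hcomplete : Function.Bijective
      ((MonoidAlgebra.lift ℂ (∀ i, Matrix (Fin (d i)) (Fin (d i)) ℂ) G)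
        { toFun := fun g i => ρ i g
          map_one' := funext fun i => hone i
          map_mul' := fun g h => funext fun i => hmul i g h }))
    {n : ℕ} (Φ Ψ : G → Matrix (Fin n) (Fin n) ℂ) :
    ∑ g : G, Φ g⁻¹ * Ψ g = (1 / (Fintype.card G : ℂ)) •
      ∑ i : I, (d i : ℂ) • ptrace (fourier (ρ i) Φ * fourier (ρ i) Ψ) :=
  plancherel_general d ρ hmul hone hcomplete Φ Ψ

end Stmt7
end

section
/- For all ℂ-linear maps Φ, Ψ : Matrix (Fin m) (Fin m) ℂ → Matrix (Fin n) (Fin n) ℂ, the matrix-unit Plancherel formula holds: ∑_{i,j ∈ Fin m} Φ(e_{ji}) * Ψ(e_{ij}) = tr₁(C_Φ * C_Ψ). -/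
namespace Stmt8

/-- The Choi matrix of a linear map `Φ`, with entries
`C_Φ ((i,a),(j,b)) = (Φ e_{ij}) a b`. -/
noncomputable def choi {m n : ℕ}
    (Φ : Matrix (Fin m) (Fin m) ℂ →ₗ[ℂ] Matrix (Fin n) (Fin n) ℂ) :
    Matrix (Fin m × Fin n) (Fin m × Fin n) ℂ :=
  Matrix.of fun p q => Φ (Matrix.single p.1 q.1 1) p.2 q.2

/-- Partial trace over the first tensor factor:
`(tr₁ M)(a,b) = ∑ x, M ((x,a),(x,b))`. -/
noncomputable def ptrace {m n : ℕ} (M : Matrix (Fin m × Fin n) (Fin m × Fin n) ℂ) :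
    Matrix (Fin n) (Fin n) ℂ :=
  Matrix.of fun a b => ∑ x : Fin m, M (x, a) (x, b)

theorem matrix_unit_plancherel {m n : ℕ}
    (Φ Ψ : Matrix (Fin m) (Fin m) ℂ →ₗ[ℂ] Matrix (Fin n) (Fin n) ℂ) :
    ∑ i : Fin m, ∑ j : Fin m,
        Φ (Matrix.single j i 1) * Ψ (Matrix.single i j 1) =
      ptrace (choi Φ * choi Ψ) := by
  ext a b
  simp only [ptrace, choi, Matrix.sum_apply, Matrix.mul_apply, Matrix.of_apply,
    Fintype.sum_prod_type]
  -- both sides are `∑ x y c, Φ(e_{yx}) a c * Ψ(e_{xy}) c b`, with `x, y` summed in opposite orders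
  exact Finset.sum_comm

end Stmt8
end

section
/- Let G be a finite group, Φ : G → Matrix (Fin n) (Fin n) ℂ a positive definite map, and ρ : G → Matrix (Fin d) (Fin d) ℂ any unitary matrix representation of G. Then the Fourier transform Φ̂(ρ) = ∑_{g ∈ G} ρ(g) ⊗ₖ Φ(g) is positive semidefinite. -/
/-!
Since `ρ` is unitary, `ρ(h)ᴴ ρ(k) = ρ(h⁻¹k)`, so substituting `g = h⁻¹k` gives
`|G| • Φ̂(ρ) = ∑_{h,k} ρ(h)ᴴ ρ(k) ⊗ Φ(h⁻¹k)`. Expanding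
`(ρ(h)ᴴ ρ(k))_{ab} = ∑_c conj(ρ(h)_{ca}) ρ(k)_{cb}` exhibits the right-hand side as
`∑_c B_cᴴ M B_c`, where `M = (Φ(h⁻¹k))_{h,k}` is the positive semidefinite block matrix of the
hypothesis and `B_c = (ρ(h)_{ca})_{h,a} ⊗ 1`. A sum of congruences of a positive semidefinite
matrix is positive semidefinite.
-/

open scoped Kronecker Matrix ComplexOrder

namespace Stmt9

/-- `Φ : G → Matrix (Fin n) (Fin n) ℂ` is positive definite if the matrix with entries
`((g,a),(g',b)) ↦ (Φ (g⁻¹ * g')) a b` is positive semidefinite. -/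
def IsPosDefMap {G : Type*} [Group G] [Fintype G] {n : ℕ}
    (Φ : G → Matrix (Fin n) (Fin n) ℂ) : Prop :=
  Matrix.PosSemidef (Matrix.of fun p q : G × Fin n => Φ (p.1⁻¹ * q.1) p.2 q.2)

end Stmt9

theorem Fintype.sum_sum_comp_inv_mul {G β : Type*} [Group G] [Fintype G] [AddCommMonoid β]
    (f : G → β) : ∑ h, ∑ k, f (h⁻¹ * k) = Fintype.card G • ∑ g, f g := by
  rw [← Finset.card_univ, ← Finset.sum_const]
  exact Finset.sum_congr rfl fun h _ => Equiv.sum_comp (Equiv.mulLeft h⁻¹) f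

namespace Matrix

section Kernel

variable {R : Type*} [CommRing R] [StarRing R]
  {κ m ι n : Type*} [Fintype κ] [Fintype m] [Fintype n] [DecidableEq n]

theorem sum_conjTranspose_mul_mul_kronecker_one (X : κ → Matrix m ι R)
    (M : Matrix (κ × n) (κ × n) R) :
    ∑ c, (of (fun h a => X h c a) ⊗ₖ (1 : Matrix n n R))ᴴ * M *
        (of (fun h a => X h c a) ⊗ₖ (1 : Matrix n n R)) =
      ∑ h, ∑ k, ((X h)ᴴ * X k) ⊗ₖ of fun i j => M (h, i) (k, j) := by
  ext ⟨a, i⟩ ⟨b, j⟩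
  simp only [Matrix.sum_apply, mul_apply, Fintype.sum_prod_type, conjTranspose_apply,
    kroneckerMap_apply, of_apply, one_apply, apply_ite star, star_zero, mul_ite, ite_mul, mul_one,
    mul_zero, zero_mul, Finset.sum_mul, Finset.sum_ite_eq', Finset.mem_univ, if_true]
  rw [Finset.sum_comm]
  conv_rhs => rw [Finset.sum_comm]
  refine Finset.sum_congr rfl fun k _ => ?_
  rw [Finset.sum_comm]
  exact Finset.sum_congr rfl fun h _ => Finset.sum_congr rfl fun c _ => by ring

theorem posSemidef_sum_sum_conjTranspose_mul_kronecker [Finite ι] [PartialOrder R]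
    [AddLeftMono R] {Ψ : κ → κ → Matrix n n R}
    (hΨ : (of fun p q : κ × n => Ψ p.1 q.1 p.2 q.2).PosSemidef)
    (X : κ → Matrix m ι R) : (∑ h, ∑ k, ((X h)ᴴ * X k) ⊗ₖ Ψ h k).PosSemidef := by
  have hsum := posSemidef_sum Finset.univ fun c _ =>
    hΨ.conjTranspose_mul_mul_same (of (fun h a => X h c a) ⊗ₖ (1 : Matrix n n R))
  rwa [sum_conjTranspose_mul_mul_kronecker_one] at hsum

end Kernel

theorem PosSemidef.of_nsmul {𝕜 n : Type*} [RCLike 𝕜] {A : Matrix n n 𝕜} {k : ℕ} (hk : k ≠ 0)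
    (hA : (k • A).PosSemidef) : A.PosSemidef := by
  have := hA.smul (by positivity : (0 : 𝕜) ≤ (k : 𝕜)⁻¹)
  rwa [← Nat.cast_smul_eq_nsmul 𝕜, smul_smul, inv_mul_cancel₀ (Nat.cast_ne_zero.mpr hk),
    one_smul] at this

end Matrix

namespace Stmt9

theorem fourier_posSemidef_of_posDef_general
    {G : Type*} [Group G] [Fintype G] {n d : ℕ}
    (Φ : G → Matrix (Fin n) (Fin n) ℂ) (hΦ : IsPosDefMap Φ)
    (ρ : G → Matrix (Fin d) (Fin d) ℂ)
    (hmul : ∀ g h : G, ρ (g * h) = ρ g * ρ h)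
    (hstar : ∀ g : G, (ρ g)ᴴ = ρ g⁻¹) :
    Matrix.PosSemidef (∑ g : G, ρ g ⊗ₖ Φ g) := by
  have hρ : ∀ h k : G, (ρ h)ᴴ * ρ k = ρ (h⁻¹ * k) := fun h k => by rw [hstar, hmul]
  have hsum := Matrix.posSemidef_sum_sum_conjTranspose_mul_kronecker
    (Ψ := fun h k => Φ (h⁻¹ * k)) hΦ ρ
  simp only [hρ] at hsum
  rw [Fintype.sum_sum_comp_inv_mul fun g => ρ g ⊗ₖ Φ g] at hsum
  exact hsum.of_nsmul Fintype.card_ne_zero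

theorem fourier_posSemidef_of_posDef
    {G : Type*} [Group G] [Fintype G] {n d : ℕ}
    (Φ : G → Matrix (Fin n) (Fin n) ℂ) (hΦ : IsPosDefMap Φ)
    (ρ : G → Matrix (Fin d) (Fin d) ℂ)
    (hmul : ∀ g h : G, ρ (g * h) = ρ g * ρ h)
    (hone : ρ 1 = 1)
    (hstar : ∀ g : G, (ρ g)ᴴ = ρ g⁻¹) :
    Matrix.PosSemidef (∑ g : G, ρ g ⊗ₖ Φ g) :=
  fourier_posSemidef_of_posDef_general Φ hΦ ρ hmul hstar

end Stmt9
end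

section
/- (Bochner's theorem reduces to Choi's theorem on matrix algebras.) For a ℂ-linear map Φ : Matrix (Fin m) (Fin m) ℂ → Matrix (Fin n) (Fin n) ℂ, the following are equivalent: (a) Φ is positive definite, i.e. the matrix indexed by (Fin m × Fin m) × Fin n with entries (((i,j),a),((k,l),b)) ↦ (Φ (e_{ji} * e_{kl})) a b is positive semidefinite; (b) the Choi matrix C_Φ is positive semidefinite. -/
/-!
The matrix `(Φ (e_{ji} * e_{kl})) a b` vanishes unless `i = k`, and then equals the Choi entry
`C_Φ ((j,a),(l,b))`. So, up to reassociating the index `((i,j),a) ↦ (i,(j,a))`, it is the block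
diagonal matrix `1 ⊗ C_Φ` with `m` copies of `C_Φ`, which is positive semidefinite iff `C_Φ` is.
-/

open scoped Matrix ComplexOrder Kronecker

namespace Stmt11

/-- The Choi matrix of a linear map `Φ`, with entries
`C_Φ ((i,a),(j,b)) = (Φ e_{ij}) a b`. -/
noncomputable def choi {m n : ℕ}
    (Φ : Matrix (Fin m) (Fin m) ℂ →ₗ[ℂ] Matrix (Fin n) (Fin n) ℂ) :
    Matrix (Fin m × Fin n) (Fin m × Fin n) ℂ :=
  Matrix.of fun p q => Φ (Matrix.single p.1 q.1 1) p.2 q.2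

open Matrix

theorem single_one_mul_single_one {ι α : Type*} [Fintype ι] [DecidableEq ι] [Semiring α]
    (i j k l : ι) :
    single j i (1 : α) * single k l 1 = if i = k then single j l 1 else 0 := by
  split_ifs with h
  · subst h
    simp
  · exact single_mul_single_of_ne (c := (1 : α)) j i k h 1

theorem posSemidef_one_kronecker_iff {ι κ 𝕜 : Type*} [Fintype ι] [DecidableEq ι] [Nonempty ι]
    [Fintype κ] [RCLike 𝕜] {A : Matrix κ κ 𝕜} :
    ((1 : Matrix ι ι 𝕜) ⊗ₖ A).PosSemidef ↔ A.PosSemidef := by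
  refine ⟨fun h => ?_, PosSemidef.one.kronecker⟩
  obtain ⟨i⟩ := ‹Nonempty ι›
  convert h.submatrix (fun k => (i, k))
  ext
  simp

theorem PosSemidef.of_isEmpty {ι R : Type*} [Fintype ι] [IsEmpty ι] [Ring R] [PartialOrder R]
    [StarRing R] (M : Matrix ι ι R) : M.PosSemidef :=
  Subsingleton.elim 0 M ▸ PosSemidef.zero

/-- `Φ` is positive definite in Bochner's sense iff this matrix is positive semidefinite. -/
noncomputable def bochnerMatrix {m n : ℕ}
    (Φ : Matrix (Fin m) (Fin m) ℂ →ₗ[ℂ] Matrix (Fin n) (Fin n) ℂ) :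
    Matrix ((Fin m × Fin m) × Fin n) ((Fin m × Fin m) × Fin n) ℂ :=
  of fun p q => Φ (single p.1.2 p.1.1 1 * single q.1.1 q.1.2 1) p.2 q.2

theorem bochnerMatrix_eq_submatrix_one_kronecker_choi {m n : ℕ}
    (Φ : Matrix (Fin m) (Fin m) ℂ →ₗ[ℂ] Matrix (Fin n) (Fin n) ℂ) :
    bochnerMatrix Φ = ((1 : Matrix (Fin m) (Fin m) ℂ) ⊗ₖ choi Φ).submatrix
      (Equiv.prodAssoc _ _ _) (Equiv.prodAssoc _ _ _) := by
  ext ⟨⟨i, j⟩, a⟩ ⟨⟨k, l⟩, b⟩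
  by_cases h : i = k <;> simp [bochnerMatrix, choi, single_one_mul_single_one, one_apply, h]

theorem posDef_iff_choi_posSemidef {m n : ℕ}
    (Φ : Matrix (Fin m) (Fin m) ℂ →ₗ[ℂ] Matrix (Fin n) (Fin n) ℂ) :
    Matrix.PosSemidef (Matrix.of fun p q : (Fin m × Fin m) × Fin n =>
        Φ (Matrix.single p.1.2 p.1.1 1 * Matrix.single q.1.1 q.1.2 1)
          p.2 q.2) ↔
      Matrix.PosSemidef (choi Φ) := by
  change (bochnerMatrix Φ).PosSemidef ↔ _
  rcases isEmpty_or_nonempty (Fin m) with hm | hm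
  · exact iff_of_true (PosSemidef.of_isEmpty _) (PosSemidef.of_isEmpty _)
  · rw [bochnerMatrix_eq_submatrix_one_kronecker_choi, posSemidef_submatrix_equiv,
      posSemidef_one_kronecker_iff]

end Stmt11
end
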